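/- For every odd integer n ≥ 5 there exists a strongly connected digraph D on n vertices such that every vertex x of D satisfies 2·deg(x) ≥ n + 1 (i.e., all degrees are at least (n+1)/2), and D has exactly one noncritical vertex. (Hence the degree bound (n+2)/2 guaranteeing two noncritical vertices cannot be lowered to (n+1)/2.) -/

import Mathlib

/-- A digraph (given by its adjacency/arc relation `Adj`) is strongly connected if
every vertex can reach every other vertex by a directed path. -/
def IsStronglyConnected {V : Type*} (Adj : V → V → Prop) : Prop :=
  ∀ x y : V, Relation.ReflTransGen Adj x y

/-- The degree of a vertex `x`: the number of vertices `y ≠ x` joined to `x`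
by an arc in at least one direction. -/
noncomputable def degree {V : Type*} (Adj : V → V → Prop) (x : V) : ℕ :=
  {y : V | y ≠ x ∧ (Adj x y ∨ Adj y x)}.ncard

/-- A vertex `v` is noncritical if the digraph obtained by deleting `v`
(induced on the remaining vertices) is strongly connected. -/
def Noncritical {V : Type*} (Adj : V → V → Prop) (v : V) : Prop :=
  IsStronglyConnected (fun a b : {u : V // u ≠ v} => Adj a b)

/-!
Take `k = (n - 1) / 2` pairs of vertices `tᵢ → hᵢ` and an apex `c`, with arcs `hᵢ → c`, `c → tⱼ`
and `hᵢ → tⱼ` for all `i, j`; every vertex then has degree at least `k + 1`. Deleting `c` leaves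
the strongly connected digraph `tᵢ → hᵢ → tⱼ`. But `tᵢ` is the only in-neighbour of `hᵢ` and `hᵢ`
the only out-neighbour of `tᵢ`, so deleting either one cuts its partner off from `c`.
-/

section Comap

variable {α β : Type*} (e : α ≃ β) {Adj : β → β → Prop}

theorem IsStronglyConnected.comap (h : IsStronglyConnected Adj) :
    IsStronglyConnected (fun a b => Adj (e a) (e b)) := fun x y => by
  simpa [Function.onFun] using (h (e x) (e y)).lift (p := fun a b => Adj (e a) (e b)) e.symm
    fun a b hab => by simpa [Function.onFun] using hab

theorem isStronglyConnected_comap_iff :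
    IsStronglyConnected (fun a b => Adj (e a) (e b)) ↔ IsStronglyConnected Adj :=
  ⟨fun h => by simpa using h.comap e.symm, IsStronglyConnected.comap e⟩

theorem noncritical_comap_iff {v : α} :
    Noncritical (fun a b => Adj (e a) (e b)) v ↔ Noncritical Adj (e v) :=
  isStronglyConnected_comap_iff (Adj := fun a b : {b // b ≠ e v} => Adj a b)
    (e.subtypeEquiv (p := (· ≠ v)) fun _ => e.injective.ne_iff.symm)

theorem degree_comap (x : α) : degree (fun a b => Adj (e a) (e b)) x = degree Adj (e x) := by
  rw [degree, degree, ← Set.ncard_preimage_of_injective_subset_range e.injective (by simp)]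
  simp

end Comap

section Noncritical

variable {V : Type*} {Adj : V → V → Prop} {v : V}

theorem Noncritical.flip (hv : Noncritical Adj v) : Noncritical (flip Adj) v :=
  fun x y => (hv y x).swap

theorem Noncritical.isStronglyConnected (hv : Noncritical Adj v) {u w : V} (hu : u ≠ v)
    (hvu : Adj v u) (hw : w ≠ v) (hwv : Adj w v) : IsStronglyConnected Adj := by
  have lift (a b : {u : V // u ≠ v}) : Relation.ReflTransGen Adj a b :=
    (hv a b).lift Subtype.val fun _ _ h => h
  have to_v (a : V) : Relation.ReflTransGen Adj a v := by
    by_cases ha : a = v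
    · rw [ha]
    · exact (lift ⟨a, ha⟩ ⟨w, hw⟩).tail hwv
  have from_v (b : V) : Relation.ReflTransGen Adj v b := by
    by_cases hb : b = v
    · rw [hb]
    · exact (lift ⟨u, hu⟩ ⟨b, hb⟩).head hvu
  exact fun x y => (to_v x).trans (from_v y)

theorem not_noncritical_of_forall_adj_to {w x : V} (hw : w ≠ v) (hx : x ≠ v) (hxw : x ≠ w)
    (hin : ∀ u, Adj u w → u = v) : ¬ Noncritical Adj v := by
  intro hv
  suffices ∀ b, Relation.ReflTransGen (fun a b : {u : V // u ≠ v} => Adj a b) ⟨x, hx⟩ b →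
      b.val ≠ w from this _ (hv _ ⟨w, hw⟩) rfl
  intro b hb
  induction hb with
  | refl => exact hxw
  | @tail a b _ hab _ => exact fun hbw => a.prop (hin _ (hbw ▸ hab))

theorem not_noncritical_of_forall_adj_from {w x : V} (hw : w ≠ v) (hx : x ≠ v) (hxw : x ≠ w)
    (hout : ∀ u, Adj w u → u = v) : ¬ Noncritical Adj v :=
  fun hv => not_noncritical_of_forall_adj_to (Adj := flip Adj) hw hx hxw hout hv.flip

end Noncritical

namespace ExtremalDigraph

variable {ι : Type*}

/-- `none` is the apex `c`, `some (inl i)` is `tᵢ` and `some (inr i)` is `hᵢ`. -/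
def adj : Option (ι ⊕ ι) → Option (ι ⊕ ι) → Prop
  | some (.inl i), some (.inr j) => i = j
  | some (.inr _), none => True
  | some (.inr _), some (.inl _) => True
  | none, some (.inl _) => True
  | _, _ => False

theorem adj_irrefl (x : Option (ι ⊕ ι)) : ¬ adj x x := by
  rcases x with _ | i | i <;> simp [adj]

theorem noncritical_none : Noncritical (adj (ι := ι)) none := by
  let low (i : ι) : {u : Option (ι ⊕ ι) // u ≠ none} := ⟨some (.inl i), by simp⟩
  let high (i : ι) : {u : Option (ι ⊕ ι) // u ≠ none} := ⟨some (.inr i), by simp⟩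
  have reaches_high (x) : ∃ i, Relation.ReflTransGen (fun a b => adj a.1 b.1) x (high i) := by
    rcases x with ⟨_ | i | i, hx⟩
    · exact absurd rfl hx
    · exact ⟨i, .single rfl⟩
    · exact ⟨i, .refl⟩
  have high_reaches (i y) : Relation.ReflTransGen (fun a b => adj a.1 b.1) (high i) y := by
    rcases y with ⟨_ | j | j, hy⟩
    · exact absurd rfl hy
    · exact .single trivial
    · exact (Relation.ReflTransGen.single (b := low j) trivial).tail rfl
  intro x y
  obtain ⟨i, hxi⟩ := reaches_high x
  exact hxi.trans (high_reaches i y)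

theorem isStronglyConnected [Nonempty ι] : IsStronglyConnected (adj (ι := ι)) := by
  obtain ⟨i⟩ := ‹Nonempty ι›
  exact noncritical_none.isStronglyConnected (u := some (.inl i)) (w := some (.inr i))
    (by simp) trivial (by simp) trivial

theorem not_noncritical_some (x : ι ⊕ ι) : ¬ Noncritical (adj (ι := ι)) (some x) := by
  rcases x with i | i
  · refine not_noncritical_of_forall_adj_to (w := some (.inr i)) (x := none)
      (by simp) (by simp) (by simp) ?_
    rintro (_ | j | j) h <;> simp_all [adj]
  · refine not_noncritical_of_forall_adj_from (w := some (.inl i)) (x := none)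
      (by simp) (by simp) (by simp) ?_
    rintro (_ | j | j) h <;> simp_all [adj]

theorem noncritical_iff {x : Option (ι ⊕ ι)} : Noncritical adj x ↔ x = none := by
  rcases x with _ | x
  · exact iff_of_true noncritical_none rfl
  · exact iff_of_false (not_noncritical_some x) (by simp)

theorem degree_none [Finite ι] : degree (adj (ι := ι)) none = 2 * Nat.card ι := by
  have : {y | y ≠ none ∧ (adj none y ∨ adj y none)} = Set.range (some : ι ⊕ ι → _) := by
    ext (_ | i | i) <;> simp [adj]
  rw [degree, this, Set.ncard_range_of_injective (Option.some_injective _), Nat.card_sum]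
  ring

theorem degree_some_inl [Finite ι] (i : ι) :
    degree (adj (ι := ι)) (some (.inl i)) = Nat.card ι + 1 := by
  have : {y | y ≠ some (.inl i) ∧ (adj (some (.inl i)) y ∨ adj y (some (.inl i)))} =
      insert none (Set.range (some ∘ Sum.inr)) := by
    ext (_ | j | j) <;> simp [adj]
  rw [degree, this, Set.ncard_insert_of_notMem (by simp),
    Set.ncard_range_of_injective ((Option.some_injective _).comp Sum.inr_injective)]

theorem degree_some_inr [Finite ι] (i : ι) :
    degree (adj (ι := ι)) (some (.inr i)) = Nat.card ι + 1 := by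
  have : {y | y ≠ some (.inr i) ∧ (adj (some (.inr i)) y ∨ adj y (some (.inr i)))} =
      insert none (Set.range (some ∘ Sum.inl)) := by
    ext (_ | j | j) <;> simp [adj]
  rw [degree, this, Set.ncard_insert_of_notMem (by simp),
    Set.ncard_range_of_injective ((Option.some_injective _).comp Sum.inl_injective)]

end ExtremalDigraph

open ExtremalDigraph

/-- For every odd `n ≥ 5` there is a strongly connected digraph on `n` vertices
with all degrees at least `(n + 1) / 2` (i.e. `2 * deg x ≥ n + 1`) having
exactly one noncritical vertex. -/
theorem exists_min_degree_digraph_with_unique_noncritical (n : ℕ) (hn : 5 ≤ n) (hodd : Odd n) :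
    ∃ Adj : Fin n → Fin n → Prop,
      (∀ x, ¬ Adj x x) ∧
      IsStronglyConnected Adj ∧
      (∀ x, n + 1 ≤ 2 * degree Adj x) ∧
      (∃! v, Noncritical Adj v) := by
  obtain ⟨k, rfl⟩ := hodd
  have : Nonempty (Fin k) := ⟨⟨0, by omega⟩⟩
  let e : Fin (2 * k + 1) ≃ Option (Fin k ⊕ Fin k) :=
    Fintype.equivOfCardEq <| by
      simp only [Fintype.card_option, Fintype.card_sum, Fintype.card_fin]
      ring
  refine ⟨fun a b => adj (e a) (e b), fun x => adj_irrefl (e x), isStronglyConnected.comap e,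
    fun x => ?_, ?_⟩
  · rw [degree_comap]
    rcases e x with _ | i | i <;>
      simp only [degree_none, degree_some_inl, degree_some_inr, Nat.card_fin] <;> omega
  · simp only [noncritical_comap_iff, noncritical_iff, ← e.eq_symm_apply]
    exact existsUnique_eq
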